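/- arXiv:0710.1273 — 3 statements merged into one kernel-verified Lean document; each statement's English description precedes it below -/
import Mathlib

section
/- Let F be a field and let M(x)=[A(x)|B(x)] be a bipartite pattern matrix in n unknowns. Let 𝒜 be a largest left matchbox and ℬ a largest right matchbox such that v(𝒜,ℬ) is minimal among all pairs consisting of a largest left matchbox and a largest right matchbox. Then there exist a permutation matrix P of size m and permutation matrices Q₁ of size p and Q₂ of size q such that [P·A(ε_{𝒜∪ℬ})·Q₁ | P·B(ε_{𝒜∪ℬ})·Q₂] equals the canonical bipartite matrix C(r,s,t) with r = v(𝒜,ℬ), s = |𝒜| − r, and t = |ℬ| − r. -/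
/-! In `M(ε_{𝒜∪ℬ})` the A-block is the partial permutation matrix of `𝒜` and the B-block that of
`ℬ`: two partial injections from rows to columns. Sorting the rows by whether they meet both
matchboxes, only `𝒜`, only `ℬ` or neither (classes of sizes `r`, `s`, `t` and `m - r - s - t`)
gives the row permutation, by comparing fibre cardinalities. After it, each block has its ones
exactly in the rows where `C(r,s,t)` has them; sending the column of such a one in `C(r,s,t)` to
its column in the matchbox is a partial injection, and extending it to a permutation gives the
column permutation of that block. -/

open Matrix

/-- A position in the bipartite pattern: either an entry of the `m × p` A-block
or an entry of the `m × q` B-block. -/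
abbrev BipPos (m p q : ℕ) := (Fin m × Fin p) ⊕ (Fin m × Fin q)

/-- The row index of a position. -/
def posRow {m p q : ℕ} : BipPos m p q → Fin m := Sum.elim Prod.fst Prod.fst

/-- The column index of a position (as a column of the block matrix `[A|B]`). -/
def posCol {m p q : ℕ} : BipPos m p q → Fin p ⊕ Fin q := Sum.map Prod.snd Prod.snd

/-- The A-block of the pattern matrix, at the substitution `a`. -/
def patA {m p q n : ℕ} (pos : Fin n → BipPos m p q) {R : Type*} [CommRing R]
    (a : Fin n → R) : Matrix (Fin m) (Fin p) R :=
  Matrix.of fun i j => ∑ l : Fin n, if pos l = Sum.inl (i, j) then a l else 0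

/-- The B-block of the pattern matrix, at the substitution `a`. -/
def patB {m p q n : ℕ} (pos : Fin n → BipPos m p q) {R : Type*} [CommRing R]
    (a : Fin n → R) : Matrix (Fin m) (Fin q) R :=
  Matrix.of fun i k => ∑ l : Fin n, if pos l = Sum.inr (i, k) then a l else 0

/-- The full bipartite pattern matrix `M = [A | B]` at the substitution `a`. -/
def patM {m p q n : ℕ} (pos : Fin n → BipPos m p q) {R : Type*} [CommRing R]
    (a : Fin n → R) : Matrix (Fin m) (Fin p ⊕ Fin q) R :=
  Matrix.fromCols (patA pos a) (patB pos a)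

/-- The generic point: the variables `x₁, …, xₙ` viewed in the field
`K = F(x₁,…,xₙ)` of rational functions. -/
noncomputable def genericX (F : Type*) [Field F] (n : ℕ) :
    Fin n → FractionRing (MvPolynomial (Fin n) F) :=
  fun l => algebraMap (MvPolynomial (Fin n) F) (FractionRing (MvPolynomial (Fin n) F))
    (MvPolynomial.X l)

/-- The generic rank `r_A` of the A-block. -/
noncomputable def genRankA (F : Type*) [Field F] {m p q n : ℕ}
    (pos : Fin n → BipPos m p q) : ℕ :=
  (patA pos (genericX F n)).rank

/-- The generic rank `r_B` of the B-block. -/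
noncomputable def genRankB (F : Type*) [Field F] {m p q n : ℕ}
    (pos : Fin n → BipPos m p q) : ℕ :=
  (patB pos (genericX F n)).rank

/-- The generic rank `r_M` of `M = [A | B]`. -/
noncomputable def genRankM (F : Type*) [Field F] {m p q n : ℕ}
    (pos : Fin n → BipPos m p q) : ℕ :=
  (patM pos (genericX F n)).rank

/-- Equivalence of bipartite matrices: `[A'|B'] = [S·A·R₁ | S·B·R₂]` with
`S, R₁, R₂` invertible. -/
def BipEquiv {F : Type*} [Field F] {m p q : ℕ}
    (A : Matrix (Fin m) (Fin p) F) (B : Matrix (Fin m) (Fin q) F)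
    (A' : Matrix (Fin m) (Fin p) F) (B' : Matrix (Fin m) (Fin q) F) : Prop :=
  ∃ (S : Matrix (Fin m) (Fin m) F) (R₁ : Matrix (Fin p) (Fin p) F)
    (R₂ : Matrix (Fin q) (Fin q) F),
    IsUnit S ∧ IsUnit R₁ ∧ IsUnit R₂ ∧ A' = S * A * R₁ ∧ B' = S * B * R₂

/-- The A-block of the canonical bipartite matrix `C(r,s,t)`:
`I_r` in rows `1..r`, columns `1..r`, and `I_s` in rows `r+1..r+s`,
columns `r+1..r+s`. -/
def canonA (F : Type*) [Field F] (m p r s : ℕ) : Matrix (Fin m) (Fin p) F :=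
  Matrix.of fun i j => if (i : ℕ) = (j : ℕ) ∧ (i : ℕ) < r + s then 1 else 0

/-- The B-block of the canonical bipartite matrix `C(r,s,t)`:
`I_r` in rows `1..r`, columns `t+1..t+r`, and `I_t` in rows `r+s+1..r+s+t`,
columns `1..t`. -/
def canonB (F : Type*) [Field F] (m q r s t : ℕ) : Matrix (Fin m) (Fin q) F :=
  Matrix.of fun i k =>
    if ((i : ℕ) < r ∧ (k : ℕ) = t + (i : ℕ)) ∨
       (r + s ≤ (i : ℕ) ∧ (i : ℕ) < r + s + t ∧ (k : ℕ) + (r + s) = (i : ℕ)) then 1 else 0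

/-- A matchbox: a set of pattern positions, no two sharing a row index and no two
within the same block sharing a column index. -/
def IsMatchbox {m p q n : ℕ} (pos : Fin n → BipPos m p q) (S : Finset (Fin n)) : Prop :=
  ∀ l ∈ S, ∀ l' ∈ S, l ≠ l' →
    posRow (pos l) ≠ posRow (pos l') ∧ posCol (pos l) ≠ posCol (pos l')

/-- A left matchbox: a matchbox all of whose positions lie in the A-block. -/
def IsLeftMatchbox {m p q n : ℕ} (pos : Fin n → BipPos m p q) (S : Finset (Fin n)) : Prop :=
  IsMatchbox pos S ∧ ∀ l ∈ S, (pos l).isLeft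

/-- A right matchbox: a matchbox all of whose positions lie in the B-block. -/
def IsRightMatchbox {m p q n : ℕ} (pos : Fin n → BipPos m p q) (S : Finset (Fin n)) : Prop :=
  IsMatchbox pos S ∧ ∀ l ∈ S, (pos l).isRight

/-- A largest left matchbox. -/
def IsLargestLeft {m p q n : ℕ} (pos : Fin n → BipPos m p q) (S : Finset (Fin n)) : Prop :=
  IsLeftMatchbox pos S ∧ ∀ T : Finset (Fin n), IsLeftMatchbox pos T → T.card ≤ S.card

/-- A largest right matchbox. -/
def IsLargestRight {m p q n : ℕ} (pos : Fin n → BipPos m p q) (S : Finset (Fin n)) : Prop :=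
  IsRightMatchbox pos S ∧ ∀ T : Finset (Fin n), IsRightMatchbox pos T → T.card ≤ S.card

/-- The set of row indices met by the positions of `S`. -/
def rowSet {m p q n : ℕ} (pos : Fin n → BipPos m p q) (S : Finset (Fin n)) : Finset (Fin m) :=
  S.image fun l => posRow (pos l)

/-- `v(𝒜,ℬ)`: the number of row indices met by both `𝒜` and `ℬ`. -/
def vCommon {m p q n : ℕ} (pos : Fin n → BipPos m p q) (𝒜 ℬ : Finset (Fin n)) : ℕ :=
  (rowSet pos 𝒜 ∩ rowSet pos ℬ).card

/-- `𝒜 ⋓ ℬ`: `𝒜` together with those positions of `ℬ` whose row is not a row of `𝒜`. -/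
def mcup {m p q n : ℕ} (pos : Fin n → BipPos m p q) (𝒜 ℬ : Finset (Fin n)) : Finset (Fin n) :=
  𝒜 ∪ ℬ.filter fun l => posRow (pos l) ∉ rowSet pos 𝒜

/-- An optimal pair: a largest left matchbox and a largest right matchbox whose number of
common row indices is minimal among all such pairs. -/
def IsOptimalPair {m p q n : ℕ} (pos : Fin n → BipPos m p q) (𝒜 ℬ : Finset (Fin n)) : Prop :=
  IsLargestLeft pos 𝒜 ∧ IsLargestRight pos ℬ ∧
  ∀ 𝒜' ℬ' : Finset (Fin n), IsLargestLeft pos 𝒜' → IsLargestRight pos ℬ' →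
    vCommon pos 𝒜 ℬ ≤ vCommon pos 𝒜' ℬ'

/-- The characteristic vector `ε_S ∈ {0,1}ⁿ` of a set of labels. -/
def charVec (F : Type*) [Zero F] [One F] {n : ℕ} (S : Finset (Fin n)) : Fin n → F :=
  fun l => if l ∈ S then 1 else 0

/-- The minor `μ_S(x)` of `M(x)` on the rows and the columns met by the matchbox `S`
(as a polynomial; well defined up to sign, rows and columns being indexed by `S`). -/
noncomputable def minorX (F : Type*) [Field F] {m p q n : ℕ} (pos : Fin n → BipPos m p q)
    (S : Finset (Fin n)) : MvPolynomial (Fin n) F :=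
  (Matrix.of fun (l : S) (l' : S) =>
    patM pos (fun i => (MvPolynomial.X i : MvPolynomial (Fin n) F))
      (posRow (pos l)) (posCol (pos l'))).det

open Finset

namespace Relator

variable {α ι : Type*}

theorem BiUnique.comp {β γ δ : Type*} {R : α → β → Prop} (hR : BiUnique R) {f : γ → α}
    (hf : Function.Injective f) {g : δ → β} (hg : Function.Injective g) :
    BiUnique fun c d => R (f c) (g d) :=
  ⟨fun _ _ _ h h' => hf (hR.1 h h'), fun _ _ _ h h' => hg (hR.2 h h')⟩

theorem BiUnique.exists_perm [Fintype α] {T : α → α → Prop} (hT : BiUnique T) :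
    ∃ τ : Equiv.Perm α, ∀ a b, T a b → τ a = b := by
  classical
  let f : α → α := fun a => if h : ∃ b, T a b then h.choose else a
  have hf : ∀ a b, T a b → f a = b := fun a b hab => by
    have h : ∃ b, T a b := ⟨b, hab⟩
    simp only [f, dif_pos h]
    exact hT.2 h.choose_spec hab
  have hinj : Set.InjOn f {a | ∃ b, T a b} := fun a ⟨b, hb⟩ a' ⟨b', hb'⟩ h => by
    rw [hf a b hb, hf a' b' hb'] at h
    exact hT.1 hb (h ▸ hb')
  obtain ⟨g, hg⟩ := Set.MapsTo.exists_equiv_extend_of_card_eq (t := univ) (by simp)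
    (fun _ _ => mem_univ _) hinj
  exact ⟨g.trans (Equiv.subtypeUnivEquiv mem_univ),
    fun a b hab => (hg a ⟨b, hab⟩).trans (hf a b hab)⟩

theorem LeftUnique.card_le [Fintype α] {R : ι → α → Prop} (hR : LeftUnique R) {D : Finset ι}
    (hD : ∀ i ∈ D, ∃ a, R i a) : #D ≤ Fintype.card α := by
  rw [← Fintype.card_coe]
  refine Fintype.card_le_of_injective (fun i => (hD i i.2).choose) fun i i' h => ?_
  have hi' := (hD i' i'.2).choose_spec
  simp only at h
  exact Subtype.ext (hR (hD i i.2).choose_spec (h ▸ hi'))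

theorem BiUnique.exists_perm_iff {p : ℕ} {R : ι → Fin p → Prop} (hR : BiUnique R) {P : ι → Prop}
    (hP : ∀ i, P i ↔ ∃ j, R i j) {φ : ι → ℕ} (hφ : Set.InjOn φ {i | P i})
    (hφp : ∀ i, P i → φ i < p) :
    ∃ τ : Equiv.Perm (Fin p), ∀ i j, R i (τ j) ↔ P i ∧ (j : ℕ) = φ i := by
  obtain ⟨τ, hτ⟩ := BiUnique.exists_perm
    (T := fun (j c : Fin p) => ∃ i, P i ∧ φ i = j ∧ R i c)
    ⟨fun _ _ _ ⟨_, _, hij, hic⟩ ⟨_, _, hij', hic'⟩ =>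
      Fin.ext (hij ▸ hij' ▸ congrArg φ (hR.1 hic hic')),
     fun _ _ _ ⟨_, hi, hij, hic⟩ ⟨_, hi', hij', hic'⟩ =>
      hR.2 hic (hφ hi' hi (hij'.trans hij.symm) ▸ hic')⟩
  have hτR : ∀ i (j : Fin p), P i → (j : ℕ) = φ i → R i (τ j) := fun i j hi hj => by
    obtain ⟨c, hc⟩ := (hP i).1 hi
    rwa [hτ j c ⟨i, hi, hj.symm, hc⟩]
  refine ⟨τ, fun i j => ⟨fun h => ?_, fun ⟨hi, hj⟩ => hτR i j hi hj⟩⟩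
  have hi := (hP i).2 ⟨_, h⟩
  have hφi := hR.2 (hτR i ⟨φ i, hφp i hi⟩ hi rfl) h
  exact ⟨hi, congrArg Fin.val (τ.injective hφi).symm⟩

end Relator

theorem Fin.card_filter_le_and_lt {m a b : ℕ} (h : b ≤ m) :
    #{i : Fin m | a ≤ (i : ℕ) ∧ (i : ℕ) < b} = b - a := by
  rw [← card_map Fin.valEmbedding, ← Nat.card_Ico]
  congr 1
  ext x
  simp only [mem_map, mem_filter, mem_univ, true_and, Fin.valEmbedding_apply, mem_Ico]
  exact ⟨fun ⟨i, hi, hx⟩ => hx ▸ hi, fun hx => ⟨⟨x, by omega⟩, hx, rfl⟩⟩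

theorem Fintype.exists_equiv_comp_eq_of_card_fiber_eq {α β γ : Type*} [Fintype α] [Fintype β]
    [DecidableEq γ]
    {f : α → γ} {g : β → γ} (h : ∀ c, #{a | f a = c} = #{b | g b = c}) :
    ∃ e : α ≃ β, ∀ a, g (e a) = f a :=
  ⟨Equiv.ofFiberEquiv fun c =>
    Fintype.equivOfCardEq (by simpa only [Fintype.card_subtype] using h c),
   Equiv.ofFiberEquiv_map _⟩

theorem Fin.exists_perm_mem_iff {m r s t : ℕ} (DA DB : Finset (Fin m)) (hr : #(DA ∩ DB) = r)
    (hs : #DA = r + s) (ht : #DB = r + t) :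
    ∃ σ : Equiv.Perm (Fin m), ∀ i, (σ i ∈ DA ↔ (i : ℕ) < r + s) ∧
      (σ i ∈ DB ↔ (i : ℕ) < r ∨ r + s ≤ (i : ℕ) ∧ (i : ℕ) < r + s + t) := by
  have hunion : #(DA ∪ DB) = r + s + t := by
    have := card_union_add_card_inter DA DB
    omega
  have hm : r + s + t ≤ m := hunion ▸ card_le_univ _ |>.trans_eq (Fintype.card_fin m)
  refine (Fintype.exists_equiv_comp_eq_of_card_fiber_eq
    (f := fun i : Fin m => (decide ((i : ℕ) < r + s),
      decide ((i : ℕ) < r ∨ r + s ≤ (i : ℕ) ∧ (i : ℕ) < r + s + t)))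
    (g := fun ρ => (decide (ρ ∈ DA), decide (ρ ∈ DB))) ?_).imp fun σ hσ i => ?_
  · have hcard_interval (a b : ℕ) (P : Fin m → Prop) [DecidablePred P] (hb : b ≤ m)
        (hP : ∀ i : Fin m, P i ↔ a ≤ (i : ℕ) ∧ (i : ℕ) < b) : #{i | P i} = b - a := by
      rw [filter_congr fun i _ => hP i, Fin.card_filter_le_and_lt hb]
    rintro ⟨_ | _, _ | _⟩ <;> simp only [Prod.mk.injEq, decide_eq_true_eq, decide_eq_false_iff_not]
    · rw [hcard_interval (r + s + t) m _ le_rfl (by omega),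
        show ({x | x ∉ DA ∧ x ∉ DB} : Finset (Fin m)) = (DA ∪ DB)ᶜ by ext; simp,
        card_compl, hunion, Fintype.card_fin]
    · rw [hcard_interval (r + s) (r + s + t) _ hm (by omega),
        show ({x | x ∉ DA ∧ x ∈ DB} : Finset (Fin m)) = DB \ DA by ext; simp [and_comm],
        card_sdiff, hr, ht]
      omega
    · rw [hcard_interval r (r + s) _ (by omega) (by omega),
        show ({x | x ∈ DA ∧ x ∉ DB} : Finset (Fin m)) = DA \ DB by ext; simp,
        card_sdiff, inter_comm, hr, hs, Nat.add_sub_cancel_left]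
    · rw [hcard_interval 0 r _ (by omega) (by omega),
        show ({x | x ∈ DA ∧ x ∈ DB} : Finset (Fin m)) = DA ∩ DB by ext; simp, hr, Nat.sub_zero]
  · simpa only [Prod.mk.injEq, decide_eq_decide] using hσ i

theorem exists_perm_canonical_of_biUnique {m p q r s t : ℕ} {R : Fin m → Fin p → Prop}
    {S : Fin m → Fin q → Prop} (hR : Relator.BiUnique R) (hS : Relator.BiUnique S)
    {DA DB : Finset (Fin m)} (hDA : ∀ i, i ∈ DA ↔ ∃ j, R i j) (hDB : ∀ i, i ∈ DB ↔ ∃ k, S i k)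
    (hr : #(DA ∩ DB) = r) (hs : #DA = r + s) (ht : #DB = r + t) :
    ∃ (σ : Equiv.Perm (Fin m)) (τ₁ : Equiv.Perm (Fin p)) (τ₂ : Equiv.Perm (Fin q)),
      (∀ i j, R (σ i) (τ₁ j) ↔ (i : ℕ) = j ∧ (i : ℕ) < r + s) ∧
      (∀ i k, S (σ i) (τ₂ k) ↔ ((i : ℕ) < r ∧ (k : ℕ) = t + i) ∨
        (r + s ≤ (i : ℕ) ∧ (i : ℕ) < r + s + t ∧ (k : ℕ) + (r + s) = i)) := by
  obtain ⟨σ, hσ⟩ := Fin.exists_perm_mem_iff DA DB hr hs ht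
  have hp : r + s ≤ p := hs ▸ (hR.1.card_le fun i hi => (hDA i).1 hi).trans_eq (Fintype.card_fin p)
  have hq : r + t ≤ q := ht ▸ (hS.1.card_le fun i hi => (hDB i).1 hi).trans_eq (Fintype.card_fin q)
  obtain ⟨τ₁, hτ₁⟩ := (hR.comp σ.injective Function.injective_id).exists_perm_iff
    (P := fun i => (i : ℕ) < r + s)
    (fun i => (hσ i).1.symm.trans (hDA _)) Fin.val_injective.injOn fun i hi => by omega
  obtain ⟨τ₂, hτ₂⟩ := (hS.comp σ.injective Function.injective_id).exists_perm_iff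
    (P := fun i => (i : ℕ) < r ∨ r + s ≤ (i : ℕ) ∧ (i : ℕ) < r + s + t)
    (φ := fun i => if (i : ℕ) < r then t + i else i - (r + s))
    (fun i => (hσ i).2.symm.trans (hDB _))
    (fun i hi i' hi' h => by simp only [Set.mem_ofPred_eq] at hi hi' h; split_ifs at h <;> omega)
    fun i hi => by split_ifs <;> omega
  refine ⟨σ, τ₁, τ₂, fun i j => (hτ₁ i j).trans (by omega), fun i k => (hτ₂ i k).trans ?_⟩
  split_ifs <;> omega

section Matchbox

variable {m p q n : ℕ} {pos : Fin n → BipPos m p q}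

theorem eq_inl_iff_posRow_posCol {x : BipPos m p q} {i : Fin m} {j : Fin p} :
    x = Sum.inl (i, j) ↔ posRow x = i ∧ posCol x = Sum.inl j := by
  rcases x with ⟨i', j'⟩ | ⟨i', k'⟩ <;> simp [posRow, posCol]

theorem eq_inr_iff_posRow_posCol {x : BipPos m p q} {i : Fin m} {k : Fin q} :
    x = Sum.inr (i, k) ↔ posRow x = i ∧ posCol x = Sum.inr k := by
  rcases x with ⟨i', j'⟩ | ⟨i', k'⟩ <;> simp [posRow, posCol]

theorem sum_ite_charVec {R : Type*} [AddCommMonoidWithOne R] (hpos : Function.Injective pos)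
    (S : Finset (Fin n)) (x : BipPos m p q) [Decidable (∃ l ∈ S, pos l = x)] :
    (∑ l, if pos l = x then charVec R S l else 0) = if ∃ l ∈ S, pos l = x then 1 else 0 := by
  split_ifs with h
  · obtain ⟨l, hl, rfl⟩ := h
    rw [sum_eq_single l (fun l' _ hl' => if_neg (hpos.ne hl')) (by simp)]
    simp [charVec, hl]
  · refine sum_eq_zero fun l _ => ?_
    split_ifs with hx
    · simp only [charVec, if_neg fun hl => h ⟨l, hl, hx⟩]
    · rfl

open scoped Classical in
theorem patA_charVec_union_apply {R : Type*} [CommRing R] (hpos : Function.Injective pos)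
    {S T : Finset (Fin n)} (hT : ∀ l ∈ T, (pos l).isRight) (i : Fin m) (j : Fin p) :
    patA pos (charVec R (S ∪ T)) i j =
      if ∃ l ∈ S, posRow (pos l) = i ∧ posCol (pos l) = Sum.inl j then 1 else 0 := by
  rw [patA, of_apply, sum_ite_charVec hpos]
  refine if_congr ⟨fun ⟨l, hl, hx⟩ => ?_, fun ⟨l, hl, hx⟩ =>
    ⟨l, mem_union_left _ hl, eq_inl_iff_posRow_posCol.2 hx⟩⟩ rfl rfl
  refine (mem_union.1 hl).elim (fun hl => ⟨l, hl, eq_inl_iff_posRow_posCol.1 hx⟩) fun hl => ?_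
  simpa [hx] using hT l hl

open scoped Classical in
theorem patB_charVec_union_apply {R : Type*} [CommRing R] (hpos : Function.Injective pos)
    {S T : Finset (Fin n)} (hS : ∀ l ∈ S, (pos l).isLeft) (i : Fin m) (k : Fin q) :
    patB pos (charVec R (S ∪ T)) i k =
      if ∃ l ∈ T, posRow (pos l) = i ∧ posCol (pos l) = Sum.inr k then 1 else 0 := by
  rw [patB, of_apply, sum_ite_charVec hpos]
  refine if_congr ⟨fun ⟨l, hl, hx⟩ => ?_, fun ⟨l, hl, hx⟩ =>
    ⟨l, mem_union_right _ hl, eq_inr_iff_posRow_posCol.2 hx⟩⟩ rfl rfl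
  refine (mem_union.1 hl).elim (fun hl => ?_) fun hl => ⟨l, hl, eq_inr_iff_posRow_posCol.1 hx⟩
  simpa [hx] using hS l hl

theorem mem_rowSet_iff_of_isLeft {S : Finset (Fin n)} (hS : ∀ l ∈ S, (pos l).isLeft)
    (i : Fin m) :
    i ∈ rowSet pos S ↔ ∃ j, ∃ l ∈ S, posRow (pos l) = i ∧ posCol (pos l) = Sum.inl j := by
  refine ⟨fun hi => ?_, fun ⟨_, l, hl, hi, _⟩ => mem_image.2 ⟨l, hl, hi⟩⟩
  obtain ⟨l, hl, rfl⟩ := mem_image.1 hi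
  obtain ⟨⟨_, j⟩, hx⟩ := Sum.isLeft_iff.1 (hS l hl)
  exact ⟨j, l, hl, rfl, by rw [hx]; rfl⟩

theorem mem_rowSet_iff_of_isRight {S : Finset (Fin n)} (hS : ∀ l ∈ S, (pos l).isRight)
    (i : Fin m) :
    i ∈ rowSet pos S ↔ ∃ k, ∃ l ∈ S, posRow (pos l) = i ∧ posCol (pos l) = Sum.inr k := by
  refine ⟨fun hi => ?_, fun ⟨_, l, hl, hi, _⟩ => mem_image.2 ⟨l, hl, hi⟩⟩
  obtain ⟨l, hl, rfl⟩ := mem_image.1 hi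
  obtain ⟨⟨_, k⟩, hx⟩ := Sum.isRight_iff.1 (hS l hl)
  exact ⟨k, l, hl, rfl, by rw [hx]; rfl⟩

theorem IsMatchbox.biUnique {S : Finset (Fin n)} (hS : IsMatchbox pos S) :
    Relator.BiUnique fun i c => ∃ l ∈ S, posRow (pos l) = i ∧ posCol (pos l) = c := by
  refine ⟨fun _ _ _ ⟨l, hl, hi, hc⟩ ⟨l', hl', hi', hc'⟩ => ?_,
    fun _ _ _ ⟨l, hl, hi, hc⟩ ⟨l', hl', hi', hc'⟩ => ?_⟩
  · obtain rfl : l = l' := by_contra fun hne => (hS l hl l' hl' hne).2 (hc.trans hc'.symm)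
    exact hi.symm.trans hi'
  · obtain rfl : l = l' := by_contra fun hne => (hS l hl l' hl' hne).1 (hi.trans hi'.symm)
    exact hc.symm.trans hc'

theorem IsMatchbox.card_rowSet {S : Finset (Fin n)} (hS : IsMatchbox pos S) :
    #(rowSet pos S) = #S :=
  card_image_of_injOn fun l hl l' hl' h => by_contra fun hne => (hS l hl l' hl' hne).1 h

end Matchbox

/-- part of Theorem 2: for an optimal pair `(𝒜, ℬ)` of largest
matchboxes, the 0–1 matrix `M(ε_{𝒜∪ℬ})` becomes, after a permutation of rows and
permutations of columns within each block, the canonical matrix `C(r,s,t)` with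
`r = v(𝒜,ℬ)`, `s = |𝒜| − r`, `t = |ℬ| − r`. -/
theorem stmt_2 (F : Type*) [Field F] (m p q n : ℕ) (pos : Fin n → BipPos m p q)
    (hpos : Function.Injective pos) (𝒜 ℬ : Finset (Fin n))
    (hopt : IsOptimalPair pos 𝒜 ℬ) :
    ∃ (σ : Equiv.Perm (Fin m)) (τ₁ : Equiv.Perm (Fin p)) (τ₂ : Equiv.Perm (Fin q)),
      (patA pos (charVec F (𝒜 ∪ ℬ))).submatrix σ τ₁ =
        canonA F m p (vCommon pos 𝒜 ℬ) (𝒜.card - vCommon pos 𝒜 ℬ) ∧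
      (patB pos (charVec F (𝒜 ∪ ℬ))).submatrix σ τ₂ =
        canonB F m q (vCommon pos 𝒜 ℬ) (𝒜.card - vCommon pos 𝒜 ℬ)
          (ℬ.card - vCommon pos 𝒜 ℬ) := by
  obtain ⟨⟨⟨h𝒜, h𝒜A⟩, -⟩, ⟨⟨hℬ, hℬB⟩, -⟩, -⟩ := hopt
  have hv𝒜 : vCommon pos 𝒜 ℬ ≤ #𝒜 := h𝒜.card_rowSet ▸ card_le_card inter_subset_left
  have hvℬ : vCommon pos 𝒜 ℬ ≤ #ℬ := hℬ.card_rowSet ▸ card_le_card inter_subset_right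
  obtain ⟨σ, τ₁, τ₂, hA, hB⟩ := exists_perm_canonical_of_biUnique (r := vCommon pos 𝒜 ℬ)
    (s := #𝒜 - vCommon pos 𝒜 ℬ) (t := #ℬ - vCommon pos 𝒜 ℬ)
    (h𝒜.biUnique.comp Function.injective_id Sum.inl_injective)
    (hℬ.biUnique.comp Function.injective_id Sum.inr_injective)
    (mem_rowSet_iff_of_isLeft h𝒜A) (mem_rowSet_iff_of_isRight hℬB) rfl
    (by rw [h𝒜.card_rowSet]; omega) (by rw [hℬ.card_rowSet]; omega)
  refine ⟨σ, τ₁, τ₂, ?_, ?_⟩ <;> ext i j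
  · rw [submatrix_apply, patA_charVec_union_apply hpos hℬB]
    exact if_congr (hA i j) rfl rfl
  · rw [submatrix_apply, patB_charVec_union_apply hpos h𝒜A]
    exact if_congr (hB i j) rfl rfl
end

section
/- Let M=[A|B] be a bipartite matrix over a field F, with A of size m×p and B of size m×q, and suppose M is equivalent to the canonical bipartite matrix C(r,s,t) for some nonnegative integers r, s, t with r+s≤p, r+t≤q, r+s+t≤m. Then r+s = rank A, r+t = rank B, and r+s+t = rank [A|B]; consequently the triple (r,s,t) is uniquely determined by M, and C(r,s,t) and C(r',s',t') are equivalent only if (r,s,t)=(r',s',t'). -/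
open Matrix

/-!
The ranks of `A`, of `B` and of `[A|B]` are invariants of equivalence, because
`[S A R₁ | S B R₂] = S [A|B] diag(R₁, R₂)`. Each of the three blocks of `C(r,s,t)` restricts to an
identity matrix on suitable rows and columns and vanishes on all other rows, so these ranks are
`r+s`, `r+t` and `r+s+t`, from which `r`, `s`, `t` are recovered.
-/

namespace Matrix

variable {R : Type*} [CommRing R] {l m n ι : Type*} [Fintype l] [Fintype n]

theorem rank_mul_mul_of_isUnit [DecidableEq l] [DecidableEq n] (S : Matrix l l R)
    (A : Matrix l n R) (T : Matrix n n R) (hS : IsUnit S) (hT : IsUnit T) :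
    (S * A * T).rank = A.rank := by
  rw [rank_mul_eq_left_of_isUnit_det T _ ((isUnit_iff_isUnit_det T).mp hT),
    rank_mul_eq_right_of_isUnit_det S A ((isUnit_iff_isUnit_det S).mp hS)]

theorem rank_eq_card_of_submatrix_eq_one [StrongRankCondition R] [Fintype ι] [DecidableEq ι]
    [DecidableEq m] (M : Matrix m n R) (f : ι → m) (g : ι → n) (hf : Function.Injective f)
    (hone : M.submatrix f g = 1) (hzero : ∀ i j, M i j ≠ 0 → i ∈ Set.range f) :
    M.rank = Fintype.card ι := by
  have hsupp : Function.support M.row ⊆ Finset.univ.image f := fun i hi => by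
    obtain ⟨j, hj⟩ := Function.ne_iff.mp hi
    simpa using hzero i j hj
  apply le_antisymm
  · calc M.rank ≤ (Finset.univ.image f).card := rank_le_card_of_support_subset M _ hsupp
      _ = Fintype.card ι := Finset.card_image_of_injective _ hf
  · calc Fintype.card ι = (M.submatrix f g).rank := by rw [hone, rank_one, Fintype.card]
      _ ≤ M.rank := rank_submatrix_le M f g

end Matrix

section BipEquiv

variable {F : Type*} [Field F] {m p q : ℕ} {A A' : Matrix (Fin m) (Fin p) F}
  {B B' : Matrix (Fin m) (Fin q) F}

theorem BipEquiv.rank_left_eq (h : BipEquiv A B A' B') : A'.rank = A.rank := by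
  obtain ⟨S, R₁, -, hS, hR₁, -, rfl, -⟩ := h
  exact Matrix.rank_mul_mul_of_isUnit S A R₁ hS hR₁

theorem BipEquiv.rank_right_eq (h : BipEquiv A B A' B') : B'.rank = B.rank := by
  obtain ⟨S, -, R₂, hS, -, hR₂, -, rfl⟩ := h
  exact Matrix.rank_mul_mul_of_isUnit S B R₂ hS hR₂

theorem BipEquiv.rank_fromCols_eq (h : BipEquiv A B A' B') :
    (Matrix.fromCols A' B').rank = (Matrix.fromCols A B).rank := by
  obtain ⟨S, R₁, R₂, hS, hR₁, hR₂, rfl, rfl⟩ := h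
  have hR : IsUnit (Matrix.fromBlocks R₁ 0 0 R₂) := by
    rw [Matrix.isUnit_iff_isUnit_det, Matrix.det_fromBlocks_zero₂₁]
    exact ((Matrix.isUnit_iff_isUnit_det _).mp hR₁).mul
      ((Matrix.isUnit_iff_isUnit_det _).mp hR₂)
  have hblock : Matrix.fromCols (S * A * R₁) (S * B * R₂) =
      S * Matrix.fromCols A B * Matrix.fromBlocks R₁ 0 0 R₂ := by
    simp [Matrix.mul_fromCols, Matrix.fromCols_mul_fromBlocks, Matrix.mul_assoc]
  rw [hblock, Matrix.rank_mul_mul_of_isUnit _ _ _ hS hR]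

end BipEquiv

section Canonical

variable (F : Type*) [Field F] {m p q : ℕ} (r s t : ℕ)

theorem rank_canonA (hp : r + s ≤ p) (hm : r + s ≤ m) : (canonA F m p r s).rank = r + s := by
  refine (Matrix.rank_eq_card_of_submatrix_eq_one _ (Fin.castLE hm) (Fin.castLE hp)
    (Fin.castLE_injective hm) ?_ ?_).trans (Fintype.card_fin _)
  · ext a b
    simp [canonA, Matrix.one_apply, Fin.ext_iff]
  · intro i j hij
    obtain ⟨⟨-, hi⟩, -⟩ := ite_ne_right_iff.mp hij
    exact ⟨⟨i, hi⟩, rfl⟩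

theorem rank_canonB (hq : r + t ≤ q) (hm : r + s + t ≤ m) :
    (canonB F m q r s t).rank = r + t := by
  let f : Fin r ⊕ Fin t → Fin m :=
    Sum.elim (fun a => ⟨a, by omega⟩) (fun b => ⟨r + s + b, by omega⟩)
  let g : Fin r ⊕ Fin t → Fin q :=
    Sum.elim (fun a => ⟨t + a, by omega⟩) (fun b => ⟨b, by omega⟩)
  have hf : Function.Injective f := by
    rintro (a | b) (a' | b') h <;> simp [f, Fin.ext_iff] at h ⊢ <;> omega
  refine (Matrix.rank_eq_card_of_submatrix_eq_one _ f g hf ?_ ?_).trans (by simp)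
  · ext (a | b) (a' | b') <;> simp [f, g, canonB, Matrix.one_apply, Fin.ext_iff] <;>
      (try split_ifs) <;> first | rfl | omega
  · intro i j hij
    obtain ⟨⟨hi, -⟩ | ⟨hi₁, hi₂, -⟩, -⟩ := ite_ne_right_iff.mp hij
    · exact ⟨Sum.inl ⟨i, hi⟩, rfl⟩
    · exact ⟨Sum.inr ⟨i - (r + s), by omega⟩, Fin.ext (by simp [f]; omega)⟩

theorem rank_fromCols_canonA_canonB (hp : r + s ≤ p) (hq : r + t ≤ q) (hm : r + s + t ≤ m) :
    (Matrix.fromCols (canonA F m p r s) (canonB F m q r s t)).rank = r + s + t := by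
  let f : Fin (r + s) ⊕ Fin t → Fin m :=
    Sum.elim (fun a => ⟨a, by omega⟩) (fun b => ⟨r + s + b, by omega⟩)
  let g : Fin (r + s) ⊕ Fin t → Fin p ⊕ Fin q :=
    Sum.map (fun a => ⟨a, by omega⟩) (fun b => ⟨b, by omega⟩)
  have hf : Function.Injective f := by
    rintro (a | b) (a' | b') h <;> simp [f, Fin.ext_iff] at h ⊢ <;> omega
  refine (Matrix.rank_eq_card_of_submatrix_eq_one _ f g hf ?_ ?_).trans (by simp)
  · ext (a | b) (a' | b') <;> simp [f, g, canonA, canonB, Matrix.one_apply, Fin.ext_iff] <;>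
      (try split_ifs) <;> first | rfl | omega
  · rintro i (j | k) hij
    · obtain ⟨⟨-, hi⟩, -⟩ := ite_ne_right_iff.mp hij
      exact ⟨Sum.inl ⟨i, hi⟩, rfl⟩
    · obtain ⟨⟨hi, -⟩ | ⟨hi₁, hi₂, -⟩, -⟩ := ite_ne_right_iff.mp hij
      · exact ⟨Sum.inl ⟨i, by omega⟩, rfl⟩
      · exact ⟨Sum.inr ⟨i - (r + s), by omega⟩, Fin.ext (by simp [f]; omega)⟩

variable {F r s t} in
theorem ranks_of_bipEquiv_canon {A : Matrix (Fin m) (Fin p) F} {B : Matrix (Fin m) (Fin q) F}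
    (hp : r + s ≤ p) (hq : r + t ≤ q) (hm : r + s + t ≤ m)
    (h : BipEquiv A B (canonA F m p r s) (canonB F m q r s t)) :
    A.rank = r + s ∧ B.rank = r + t ∧ (Matrix.fromCols A B).rank = r + s + t :=
  ⟨h.rank_left_eq.symm.trans (rank_canonA F r s hp (by omega)),
    h.rank_right_eq.symm.trans (rank_canonB F r s t hq hm),
    h.rank_fromCols_eq.symm.trans (rank_fromCols_canonA_canonB F r s t hp hq hm)⟩

end Canonical

/-- uniqueness in Lemma 1: if `[A|B]` is equivalent to `C(r,s,t)`,
then `r+s = rank A`, `r+t = rank B`, `r+s+t = rank [A|B]`; consequently the triple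
`(r,s,t)` is uniquely determined by `[A|B]`, and two canonical matrices can only be
equivalent if they are equal. -/
theorem stmt_4 (F : Type*) [Field F] (m p q r s t : ℕ)
    (hp : r + s ≤ p) (hq : r + t ≤ q) (hm : r + s + t ≤ m)
    (A : Matrix (Fin m) (Fin p) F) (B : Matrix (Fin m) (Fin q) F)
    (h : BipEquiv A B (canonA F m p r s) (canonB F m q r s t)) :
    r + s = A.rank ∧ r + t = B.rank ∧ r + s + t = (Matrix.fromCols A B).rank ∧
    (∀ r' s' t' : ℕ, r' + s' ≤ p → r' + t' ≤ q → r' + s' + t' ≤ m →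
      BipEquiv A B (canonA F m p r' s') (canonB F m q r' s' t') →
      (r, s, t) = (r', s', t')) ∧
    (∀ r' s' t' : ℕ, r' + s' ≤ p → r' + t' ≤ q → r' + s' + t' ≤ m →
      BipEquiv (canonA F m p r s) (canonB F m q r s t)
        (canonA F m p r' s') (canonB F m q r' s' t') →
      (r, s, t) = (r', s', t')) := by
  obtain ⟨hA, hB, hM⟩ := ranks_of_bipEquiv_canon hp hq hm h
  refine ⟨hA.symm, hB.symm, hM.symm, fun r' s' t' hp' hq' hm' h' => ?_,
    fun r' s' t' hp' hq' hm' h' => ?_⟩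
  · obtain ⟨hA', hB', hM'⟩ := ranks_of_bipEquiv_canon hp' hq' hm' h'
    simp only [Prod.mk.injEq]
    omega
  · obtain ⟨hA', hB', hM'⟩ := ranks_of_bipEquiv_canon hp' hq' hm' h'
    rw [rank_canonA F r s hp (by omega)] at hA'
    rw [rank_canonB F r s t hq hm] at hB'
    rw [rank_fromCols_canonA_canonB F r s t hp hq hm] at hM'
    simp only [Prod.mk.injEq]
    omega
end

section
/- Let [A|B] be a bipartite matrix over a field F, with A of size m×p and B of size m×q, whose p+q columns are linearly independent. Then there exists a permutation of the rows of [A|B] after which the submatrix of A lying in the first p rows is nonsingular and the submatrix of B lying in rows p+1, …, p+q is nonsingular. -/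
open Matrix

/-!
Some `p + q` rows of `[A|B]` form a nonsingular square matrix `[N₁|N₂]`. Writing each of its rows
as `(N₁ i, 0) + (0, N₂ i)` and expanding the determinant multilinearly in the rows gives the
generalized Laplace expansion `det [N₁|N₂] = ∑_S det [N₁ on the rows in S | N₂ on the rows not in S]`.
In a nonzero term the columns are independent, so a rank count forces `|S| = p`; after moving
the rows of `S` to the top that term is block diagonal, hence `N₁` is nonsingular on the rows in
`S` and `N₂` on the others. Extending the chosen rows to a permutation of all `m` rows finishes.
-/

namespace Matrix

section RowSelection

variable {ι κ F : Type*} [Finite ι] [Fintype κ] [Field F]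

theorem span_rows_eq_top_of_linearIndependent_cols {M : Matrix ι κ F}
    (hM : LinearIndependent F M.col) : Submodule.span F (Set.range M.row) = ⊤ := by
  apply Submodule.eq_top_of_finrank_eq
  rw [← rank_eq_finrank_span_row, rank_eq_finrank_span_cols, finrank_span_eq_card hM,
    Module.finrank_fintype_fun_eq_card]

theorem exists_injective_det_submatrix_ne_zero [DecidableEq κ] {M : Matrix ι κ F}
    (hM : LinearIndependent F M.col) :
    ∃ g : κ → ι, Function.Injective g ∧ (M.submatrix g id).det ≠ 0 := by
  obtain ⟨κ', a, ha, hspan, hli⟩ := exists_linearIndependent' F M.row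
  rw [span_rows_eq_top_of_linearIndependent_cols hM] at hspan
  let e : κ' ≃ κ := (Module.Basis.mk hli hspan.ge).indexEquiv (Pi.basisFun F κ)
  refine ⟨a ∘ e.symm, ha.comp e.symm.injective, ?_⟩
  rw [← isUnit_iff_ne_zero, ← isUnit_iff_isUnit_det, ← linearIndependent_rows_iff_isUnit]
  exact hli.comp e.symm e.symm.injective

end RowSelection

section RestrictRows

variable {ι κ R : Type*} [DecidableEq ι]

def restrictRows [Zero R] (S : Finset ι) (X : Matrix ι κ R) : Matrix ι κ R :=
  of fun i j => if i ∈ S then X i j else 0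

variable [Fintype ι] [Fintype κ] {F : Type*} [Field F]

theorem rank_restrictRows_le (S : Finset ι) (X : Matrix ι κ F) :
    (restrictRows S X).rank ≤ S.card := by
  classical
  have hX : restrictRows S X = diagonal (fun i => if i ∈ S then (1 : F) else 0) * X := by
    ext i j
    simp [restrictRows]
  calc (restrictRows S X).rank ≤ (diagonal fun i => if i ∈ S then (1 : F) else 0).rank :=
        hX ▸ rank_mul_le_left _ _
    _ = S.card := by simp [rank_diagonal]

theorem card_le_card_of_linearIndependent_cols_restrictRows {S : Finset ι} {X : Matrix ι κ F}
    (h : LinearIndependent F (restrictRows S X).col) : Fintype.card κ ≤ S.card := by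
  rw [← finrank_span_eq_card h, ← rank_eq_finrank_span_cols]
  exact rank_restrictRows_le S X

end RestrictRows

section Laplace

variable {m n : Type*} [Fintype m] [Fintype n] [DecidableEq m] [DecidableEq n]

theorem det_fromCols_eq_sum_det_restrictRows {R : Type*} [CommRing R]
    (N₁ : Matrix (m ⊕ n) m R) (N₂ : Matrix (m ⊕ n) n R) :
    (fromCols N₁ N₂).det =
      ∑ S : Finset (m ⊕ n), (fromCols (restrictRows S N₁) (restrictRows Sᶜ N₂)).det := by
  have hsplit : fromCols N₁ N₂ = fromCols N₁ 0 + fromCols 0 N₂ := by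
    ext i (j | j) <;> simp
  rw [hsplit]
  refine ((detRowAlternating : (m ⊕ n → R) [⋀^(m ⊕ n)]→ₗ[R] R).map_add_univ _ _).trans ?_
  refine Finset.sum_congr rfl fun S _ => congrArg det ?_
  ext i (j | j) <;> by_cases hi : i ∈ S <;> simp [restrictRows, Finset.piecewise, hi]

variable {F : Type*} [Field F]

theorem exists_perm_det_submatrix_ne_zero_of_det_restrictRows_ne_zero
    {N₁ : Matrix (m ⊕ n) m F} {N₂ : Matrix (m ⊕ n) n F} {S : Finset (m ⊕ n)}
    (hS : (fromCols (restrictRows S N₁) (restrictRows Sᶜ N₂)).det ≠ 0) :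
    ∃ σ : Equiv.Perm (m ⊕ n),
      (N₁.submatrix (σ ∘ Sum.inl) id).det ≠ 0 ∧ (N₂.submatrix (σ ∘ Sum.inr) id).det ≠ 0 := by
  set T := fromCols (restrictRows S N₁) (restrictRows Sᶜ N₂)
  have hT : LinearIndependent F T.col :=
    linearIndependent_cols_iff_isUnit.mpr ((isUnit_iff_isUnit_det T).mpr hS.isUnit)
  have hm : Fintype.card m ≤ S.card :=
    card_le_card_of_linearIndependent_cols_restrictRows (hT.comp Sum.inl Sum.inl_injective)
  have hn : Fintype.card n ≤ Sᶜ.card :=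
    card_le_card_of_linearIndependent_cols_restrictRows (hT.comp Sum.inr Sum.inr_injective)
  have hSle := S.card_le_univ
  rw [Fintype.card_sum] at hSle
  rw [Finset.card_compl, Fintype.card_sum] at hn
  obtain ⟨σ, hσ⟩ := Equiv.Perm.exists_map_finset_eq (Finset.univ.map .inl) S
    (by rw [Finset.card_map, Finset.card_univ]; omega)
  have hσS : ∀ x, σ x ∈ S ↔ x.isLeft := by
    intro x
    rw [← hσ, Finset.mem_map_equiv]
    cases x <;> simp
  have hblocks : T.submatrix σ id =
      fromBlocks (N₁.submatrix (σ ∘ Sum.inl) id) 0 0 (N₂.submatrix (σ ∘ Sum.inr) id) := by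
    ext (a | b) (j | k) <;> simp [T, restrictRows, hσS]
  have hdet := det_permute σ T
  rw [hblocks, det_fromBlocks_zero₂₁] at hdet
  exact ⟨σ, mul_ne_zero_iff.mp
    (hdet ▸ mul_ne_zero ((Equiv.Perm.sign σ).isUnit.map (Int.castRingHom F)).ne_zero hS)⟩

theorem exists_perm_det_submatrix_ne_zero_of_det_fromCols_ne_zero
    {N₁ : Matrix (m ⊕ n) m F} {N₂ : Matrix (m ⊕ n) n F} (h : (fromCols N₁ N₂).det ≠ 0) :
    ∃ σ : Equiv.Perm (m ⊕ n),
      (N₁.submatrix (σ ∘ Sum.inl) id).det ≠ 0 ∧ (N₂.submatrix (σ ∘ Sum.inr) id).det ≠ 0 := by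
  rw [det_fromCols_eq_sum_det_restrictRows] at h
  obtain ⟨S, -, hS⟩ := Finset.exists_ne_zero_of_sum_ne_zero h
  exact exists_perm_det_submatrix_ne_zero_of_det_restrictRows_ne_zero hS

theorem exists_injective_det_submatrix_fromCols_ne_zero {ι : Type*} [Finite ι]
    {A : Matrix ι m F} {B : Matrix ι n F} (hAB : LinearIndependent F (fromCols A B).col) :
    ∃ g : m ⊕ n → ι, Function.Injective g ∧
      (A.submatrix (g ∘ Sum.inl) id).det ≠ 0 ∧ (B.submatrix (g ∘ Sum.inr) id).det ≠ 0 := by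
  obtain ⟨g, hg, hdet⟩ := exists_injective_det_submatrix_ne_zero hAB
  obtain ⟨σ, hA, hB⟩ := exists_perm_det_submatrix_ne_zero_of_det_fromCols_ne_zero
    (N₁ := A.submatrix g id) (N₂ := B.submatrix g id) hdet
  exact ⟨g ∘ σ, hg.comp σ.injective, hA, hB⟩

end Laplace

end Matrix

/-- Lemma 2: if the `p+q` columns of a bipartite matrix `[A|B]`
are linearly independent, then there is a permutation of the rows after which the
submatrix of `A` in the first `p` rows and the submatrix of `B` in rows
`p+1, …, p+q` are both nonsingular. (Linear independence forces `p + q ≤ m`.) -/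
theorem stmt_5 (F : Type*) [Field F] (m p q : ℕ) (hm : p + q ≤ m)
    (A : Matrix (Fin m) (Fin p) F) (B : Matrix (Fin m) (Fin q) F)
    (hli : LinearIndependent F (fun j => (Matrix.fromCols A B)ᵀ j)) :
    ∃ σ : Equiv.Perm (Fin m),
      (A.submatrix (fun i : Fin p => σ ⟨(i : ℕ), by have := i.2; omega⟩) id).det ≠ 0 ∧
      (B.submatrix (fun i : Fin q => σ ⟨p + (i : ℕ), by have := i.2; omega⟩) id).det ≠ 0 := by
  obtain ⟨g, hg, hA, hB⟩ := exists_injective_det_submatrix_fromCols_ne_zero hli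
  obtain ⟨σ, hσ⟩ := Equiv.Perm.exists_extending_pair (fun x => Fin.castLE hm (finSumFinEquiv x)) g
    ((Fin.castLE_injective hm).comp finSumFinEquiv.injective) hg
  refine ⟨σ, ?_, ?_⟩
  · convert hA using 3
    exact funext fun i => hσ (.inl i)
  · convert hB using 3
    exact funext fun i => hσ (.inr i)
end
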